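/- In the ISCP dynamic-programming setting, let j be any index with blk(j) = 0 (i.e., S_j belongs to the first block). Then for every b ∈ {1,2}: if W ≠ ∅, then OPT(W, j, b) = 2 when there exists an index i ≤ j with W ⊆ S_i, and OPT(W, j, b) = ∞ otherwise; and OPT(∅, j, b) = b. -/
import Mathlib


/-- `OPTI S blk flag W j b` in the ISCP dynamic-programming setting: the infimum, over
all index sets `X ⊆ {i : i ≤ j}` covering `W`, containing at most one index from every
block `β_x` with `x ≤ blk j` and exactly one index from every such block whose (updated)
flag is `2`, of `2|X|` plus the number of blocks `β_x` (`x ≤ blk j`) with (updated) flag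
`1` that `X` misses; here the flag of block `blk j` is overridden to be `b`.  The value
is `∞` if no such `X` exists. -/
noncomputable def OPTI {α : Type*} [DecidableEq α] {m q : ℕ}
    (S : Fin m → Finset α) (blk : Fin m → Fin q) (flag : Fin q → ℕ)
    (W : Finset α) (j : Fin m) (b : ℕ) : ℕ∞ :=
  sInf { n : ℕ∞ | ∃ X : Finset (Fin m),
    (∀ i ∈ X, i ≤ j) ∧
    (W ⊆ X.biUnion S) ∧
    (∀ x : Fin q, x ≤ blk j → (X.filter (fun i => blk i = x)).card ≤ 1) ∧
    (∀ x : Fin q, x ≤ blk j → Function.update flag (blk j) b x = 2 →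
      (X.filter (fun i => blk i = x)).card = 1) ∧
    n = 2 * (X.card : ℕ∞) +
      ((Finset.univ.filter (fun x : Fin q =>
        x ≤ blk j ∧ Function.update flag (blk j) b x = 1 ∧
          ∀ i ∈ X, blk i ≠ x)).card : ℕ∞) }


/-- ISCP base case: for any index `j` in the first block (`blk j = 0`)
and `b ∈ {1,2}`, if `W ≠ ∅` then `OPT(W, j, b) = 2` when `W ⊆ S_i` for some `i ≤ j`
and `∞` otherwise, and `OPT(∅, j, b) = b`. -/
theorem iscp_base_case
    {α : Type*} [DecidableEq α] {m q : ℕ} (hm : 0 < m) (hq : 0 < q)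
    (S : Fin m → Finset α) (blk : Fin m → Fin q)
    (hmono : Monotone blk) (hsurj : Function.Surjective blk)
    (flag : Fin q → ℕ) (hflag : ∀ x, flag x = 1 ∨ flag x = 2)
    (j : Fin m) (hblk₀ : (blk j : ℕ) = 0)
    (b : ℕ) (hb : b = 1 ∨ b = 2) :
    (∀ W : Finset α, W.Nonempty →
      ((∃ i : Fin m, i ≤ j ∧ W ⊆ S i) → OPTI S blk flag W j b = 2) ∧
      (¬ (∃ i : Fin m, i ≤ j ∧ W ⊆ S i) → OPTI S blk flag W j b = ⊤)) ∧
    OPTI S blk flag (∅ : Finset α) j b = (b : ℕ∞) := by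
  classical
  have hxz : ∀ x : Fin q, x ≤ blk j ↔ x = blk j := by
    intro x; rw [Fin.le_def, Fin.ext_iff]; omega
  have hupz : Function.update flag (blk j) b (blk j) = b := Function.update_self _ _ _
  have hblki : ∀ i : Fin m, i ≤ j → blk i = blk j := by
    intro i hi
    have h1 : blk i ≤ blk j := hmono hi
    rw [Fin.le_def] at h1
    exact Fin.ext (by omega)
  have hfilX : ∀ X : Finset (Fin m), (∀ i ∈ X, i ≤ j) →
      ∀ x : Fin q, x ≤ blk j → X.filter (fun i => blk i = x) = X := by
    intro X hX x hx
    rw [(hxz x).mp hx]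
    exact Finset.filter_eq_self.mpr (fun i hi => hblki i (hX i hi))
  have hmiss0 : ∀ X : Finset (Fin m), (∀ i ∈ X, i ≤ j) → X.Nonempty →
      (Finset.univ.filter (fun x : Fin q =>
        x ≤ blk j ∧ Function.update flag (blk j) b x = 1 ∧ ∀ i ∈ X, blk i ≠ x)) = ∅ := by
    rintro X hX ⟨i, hi⟩
    apply Finset.filter_eq_empty_iff.mpr
    intro x _
    rintro ⟨hx1, _, hx3⟩
    exact hx3 i hi (by rw [hblki i (hX i hi), (hxz x).mp hx1])
  -- membership of 2 via a singleton X = {i}, i ≤ j, W ⊆ S i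
  have hmem2 : ∀ (W : Finset α) (i : Fin m), i ≤ j → W ⊆ S i →
      (2 : ℕ∞) ∈ { n : ℕ∞ | ∃ X : Finset (Fin m),
        (∀ k ∈ X, k ≤ j) ∧
        (W ⊆ X.biUnion S) ∧
        (∀ x : Fin q, x ≤ blk j → (X.filter (fun k => blk k = x)).card ≤ 1) ∧
        (∀ x : Fin q, x ≤ blk j → Function.update flag (blk j) b x = 2 →
          (X.filter (fun k => blk k = x)).card = 1) ∧
        n = 2 * (X.card : ℕ∞) +
          ((Finset.univ.filter (fun x : Fin q =>
            x ≤ blk j ∧ Function.update flag (blk j) b x = 1 ∧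
              ∀ k ∈ X, blk k ≠ x)).card : ℕ∞) } := by
    intro W i hij hWS
    refine ⟨{i}, ?_, ?_, ?_, ?_, ?_⟩
    · intro k hk; rw [Finset.mem_singleton] at hk; exact hk ▸ hij
    · rwa [Finset.singleton_biUnion]
    · intro x _; exact le_trans (Finset.card_filter_le _ _) (by simp)
    · intro x hx _
      rw [hfilX {i} (by simpa using hij) x hx, Finset.card_singleton]
    · rw [hmiss0 {i} (by simpa using hij) ⟨i, Finset.mem_singleton_self i⟩]
      simp
  constructor
  · intro W hW
    constructor
    · rintro ⟨i, hij, hWS⟩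
      unfold OPTI
      apply le_antisymm
      · exact sInf_le (hmem2 W i hij hWS)
      · apply le_sInf
        rintro n ⟨X, hX1, hX2, _, _, hX5⟩
        obtain ⟨w, hw⟩ := hW
        obtain ⟨i', hi', _⟩ := Finset.mem_biUnion.mp (hX2 hw)
        have hc : (1 : ℕ∞) ≤ (X.card : ℕ∞) := by
          exact_mod_cast Finset.card_pos.mpr ⟨i', hi'⟩
        calc (2 : ℕ∞) = 2 * 1 := by norm_num
          _ ≤ 2 * (X.card : ℕ∞) := mul_le_mul_right hc 2
          _ ≤ n := hX5 ▸ le_self_add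
    · intro h
      unfold OPTI
      apply sInf_eq_top.mpr
      rintro n ⟨X, hX1, hX2, hX3, _, _⟩
      exfalso
      obtain ⟨w, hw⟩ := hW
      obtain ⟨i, hi, _⟩ := Finset.mem_biUnion.mp (hX2 hw)
      have hcard : X.card ≤ 1 := by
        have := hX3 (blk j) le_rfl
        rwa [hfilX X hX1 (blk j) le_rfl] at this
      have hsub : W ⊆ S i := by
        intro w' hw'
        obtain ⟨k, hk, hks⟩ := Finset.mem_biUnion.mp (hX2 hw')
        rwa [Finset.card_le_one.mp hcard k hk i hi] at hks
      exact h ⟨i, hX1 i hi, hsub⟩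
  · -- W = ∅
    unfold OPTI
    rcases hb with hb | hb
    · -- b = 1 : value is 1
      subst hb
      have hsingle : (Finset.univ.filter (fun x : Fin q =>
          x ≤ blk j ∧ Function.update flag (blk j) 1 x = 1 ∧
            ∀ i ∈ (∅ : Finset (Fin m)), blk i ≠ x)) = {blk j} := by
        ext x
        simp only [Finset.mem_filter, Finset.mem_univ, true_and, Finset.mem_singleton,
          Finset.notMem_empty, false_implies, implies_true, and_true]
        constructor
        · rintro ⟨h1, _⟩; exact (hxz x).mp h1
        · rintro rfl; exact ⟨le_rfl, hupz⟩
      apply le_antisymm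
      · apply sInf_le
        refine ⟨∅, by simp, by simp, by simp, ?_, ?_⟩
        · intro x hx h2
          rw [(hxz x).mp hx, hupz] at h2
          omega
        · rw [hsingle]; simp
      · apply le_sInf
        rintro n ⟨X, hX1, _, _, _, hX5⟩
        rcases X.eq_empty_or_nonempty with rfl | hne
        · rw [hX5, hsingle]; simp
        · have hc : (1 : ℕ∞) ≤ (X.card : ℕ∞) := by
            exact_mod_cast Finset.card_pos.mpr hne
          calc (1 : ℕ∞) ≤ 2 * (X.card : ℕ∞) := by
                calc (1 : ℕ∞) ≤ 2 * 1 := by norm_num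
                  _ ≤ 2 * (X.card : ℕ∞) := mul_le_mul_right hc 2
            _ ≤ n := hX5 ▸ le_self_add
    · -- b = 2 : value is 2
      subst hb
      apply le_antisymm
      · exact sInf_le (hmem2 ∅ j le_rfl (by simp))
      · apply le_sInf
        rintro n ⟨X, hX1, _, _, hX4, hX5⟩
        have h1 := hX4 (blk j) le_rfl hupz
        rw [hfilX X hX1 (blk j) le_rfl] at h1
        have hc : (1 : ℕ∞) ≤ (X.card : ℕ∞) := by exact_mod_cast h1.ge
        calc (2 : ℕ∞) = 2 * 1 := by norm_num
          _ ≤ 2 * (X.card : ℕ∞) := mul_le_mul_right hc 2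
          _ ≤ n := hX5 ▸ le_self_add
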